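/- Fix κ > 0 and let g_κ(r) := e^{−κr}/(4πr). For any three distinct points y₁, y₂, y₃ on the unit sphere S² ⊂ ℝ³, ∑_{j ≠ j'} g_κ(‖y_j − y_{j'}‖) ≥ 6 g_κ(√3), with equality if and only if all three pairwise distances ‖y_j − y_{j'}‖ equal √3, i.e. the points are the vertices of an equilateral triangle inscribed in a great circle of the sphere. -/

import Mathlib

/-- The free resolvent kernel of `−Δ` in `ℝ³` at energy `−κ²`:
`g_κ(r) = e^{−κr}/(4πr)`. -/
noncomputable def resolventKernel3D (κ r : ℝ) : ℝ :=
  Real.exp (-κ * r) / (4 * Real.pi * r)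

/-- The interaction energy `∑_{j ≠ j'} g_κ(‖y_j − y_{j'}‖)` of a family of points,
the sum running over ordered pairs of distinct indices. -/
noncomputable def interactionEnergy {n : ℕ} (κ : ℝ)
    (y : Fin n → EuclideanSpace ℝ (Fin 3)) : ℝ :=
  ∑ p ∈ Finset.univ.offDiag, resolventKernel3D κ ‖y p.1 - y p.2‖

/-! With `F s = g_κ(√s)` the energy is `∑_{j ≠ j'} F ‖y_j - y_{j'}‖²`. The function `F` is strictly
convex on `(0, ∞)` with `F' < 0`, and for `n` unit vectors
`∑_{j ≠ j'} ‖y_j - y_{j'}‖² = 2n² - 2‖∑ y_j‖² ≤ 2n²`. Summing the tangent-line inequality of `F`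
at `c = 2n/(n-1)`, the average squared distance when `∑ y_j = 0`, bounds the energy below by `n(n-1) F c`, with
equality only if every squared distance is `c`. For `n = 3`, `c = 3`. -/

open Real Finset

theorem strictConvexOn_of_hasDerivAt2_pos {D : Set ℝ} (hD : Convex ℝ D) (hDo : IsOpen D)
    {f f' f'' : ℝ → ℝ} (hf : ∀ x ∈ D, HasDerivAt f (f' x) x)
    (hf' : ∀ x ∈ D, HasDerivAt f' (f'' x) x) (hf'' : ∀ x ∈ D, 0 < f'' x) :
    StrictConvexOn ℝ D f := by
  have hmono : StrictMonoOn f' D := by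
    refine strictMonoOn_of_hasDerivWithinAt_pos (f' := f'') hD
      (fun x hx ↦ (hf' x hx).continuousAt.continuousWithinAt) ?_ ?_ <;> rw [hDo.interior_eq]
    · exact fun x hx ↦ (hf' x hx).hasDerivWithinAt
    · exact hf''
  refine StrictMonoOn.strictConvexOn_of_deriv hD
    (fun x hx ↦ (hf x hx).continuousAt.continuousWithinAt) ?_
  rw [hDo.interior_eq]
  exact hmono.congr fun x hx ↦ ((hf x hx).deriv).symm

theorem StrictConvexOn.add_mul_sub_lt {S : Set ℝ} {f : ℝ → ℝ} {x y f' : ℝ}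
    (hf : StrictConvexOn ℝ S f) (hx : x ∈ S) (hy : y ∈ S) (hxy : y ≠ x)
    (hf' : HasDerivAt f f' x) : f x + f' * (y - x) < f y := by
  rcases hxy.lt_or_gt with hlt | hgt
  · have := hf.slope_lt_of_hasDerivAt hy hx hlt hf'
    rw [slope_def_field, div_lt_iff₀ (sub_pos.2 hlt)] at this
    linarith
  · have := hf.lt_slope_of_hasDerivAt hx hy hgt hf'
    rw [slope_def_field, lt_div_iff₀ (sub_pos.2 hgt)] at this
    linarith

theorem StrictConvexOn.card_mul_le_sum {ι : Type*} {S : Set ℝ} {f : ℝ → ℝ} {c f' : ℝ}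
    (hf : StrictConvexOn ℝ S f) (hc : c ∈ S) (hfc : HasDerivAt f f' c) (hf' : f' ≤ 0)
    {s : Finset ι} {x : ι → ℝ} (hxS : ∀ i ∈ s, x i ∈ S) (hsum : ∑ i ∈ s, x i ≤ #s * c) :
    #s * f c ≤ ∑ i ∈ s, f (x i) ∧ (∑ i ∈ s, f (x i) = #s * f c ↔ ∀ i ∈ s, x i = c) := by
  set gap : ι → ℝ := fun i ↦ f (x i) - (f c + f' * (x i - c))
  have hgap_pos : ∀ i ∈ s, x i ≠ c → 0 < gap i := fun i hi hne ↦
    sub_pos.2 (hf.add_mul_sub_lt hc (hxS i hi) hne hfc)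
  have hgap : ∀ i ∈ s, 0 ≤ gap i := fun i hi ↦ by
    rcases eq_or_ne (x i) c with h | h
    · simp [gap, h]
    · exact (hgap_pos i hi h).le
  have hsplit : ∑ i ∈ s, f (x i) - #s * f c = ∑ i ∈ s, gap i + f' * (∑ i ∈ s, x i - #s * c) := by
    simp only [gap, sum_sub_distrib, sum_add_distrib, ← mul_sum, sum_const, nsmul_eq_mul]
    ring
  have hlin : 0 ≤ f' * (∑ i ∈ s, x i - #s * c) := mul_nonneg_of_nonpos_of_nonpos hf' (by linarith)
  have hgap_sum := sum_nonneg hgap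
  refine ⟨by linarith, fun heq ↦ ?_, fun h ↦ ?_⟩
  · have hzero : ∑ i ∈ s, gap i = 0 := by linarith
    rw [sum_eq_zero_iff_of_nonneg hgap] at hzero
    exact fun i hi ↦ not_not.1 fun hne ↦ (hgap_pos i hi hne).ne' (hzero i hi)
  · rw [sum_congr rfl fun i hi ↦ congrArg f (h i hi), sum_const, nsmul_eq_mul]

theorem sum_sum_norm_sub_sq {ι E : Type*} [Fintype ι] [NormedAddCommGroup E]
    [InnerProductSpace ℝ E] (y : ι → E) :
    ∑ i, ∑ j, ‖y i - y j‖ ^ 2 = 2 * Fintype.card ι * ∑ i, ‖y i‖ ^ 2 - 2 * ‖∑ i, y i‖ ^ 2 := by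
  simp only [norm_sub_sq_real, sum_add_distrib, sum_sub_distrib, sum_const, ← mul_sum,
    ← inner_sum, ← sum_inner, real_inner_self_eq_norm_sq, card_univ, nsmul_eq_mul]
  ring

theorem sum_offDiag_norm_sub_sq_le {ι E : Type*} [Fintype ι] [DecidableEq ι]
    [NormedAddCommGroup E] [InnerProductSpace ℝ E] {y : ι → E} (hy : ∀ i, ‖y i‖ = 1) :
    ∑ p ∈ univ.offDiag, ‖y p.1 - y p.2‖ ^ 2 ≤ 2 * Fintype.card ι ^ 2 := by
  calc ∑ p ∈ univ.offDiag, ‖y p.1 - y p.2‖ ^ 2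
      ≤ ∑ p ∈ univ ×ˢ univ, ‖y p.1 - y p.2‖ ^ 2 :=
        sum_le_sum_of_subset_of_nonneg (by rw [← diag_union_offDiag]; exact subset_union_right)
          fun _ _ _ ↦ sq_nonneg _
    _ = 2 * Fintype.card ι * ∑ i, ‖y i‖ ^ 2 - 2 * ‖∑ i, y i‖ ^ 2 := by
        rw [univ_product_univ, Fintype.sum_prod_type, sum_sum_norm_sub_sq]
    _ ≤ 2 * Fintype.card ι ^ 2 := by
        simp only [hy, one_pow, sum_const, card_univ, nsmul_eq_mul, mul_one]
        nlinarith [sq_nonneg ‖∑ i, y i‖]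

noncomputable def resolventKernel3DSq (κ s : ℝ) : ℝ :=
  resolventKernel3D κ √s

noncomputable def resolventKernel3DSqDeriv (κ s : ℝ) : ℝ :=
  -(exp (-κ * √s) * (κ * √s + 1)) / (8 * π * √s ^ 3)

theorem hasDerivAt_resolventKernel3DSq (κ : ℝ) {s : ℝ} (hs : 0 < s) :
    HasDerivAt (resolventKernel3DSq κ) (resolventKernel3DSqDeriv κ s) s := by
  have hr : 0 < √s := sqrt_pos.2 hs
  have hsqrt := hasDerivAt_sqrt hs.ne'
  have := ((hsqrt.const_mul (-κ)).exp).div (hsqrt.const_mul (4 * π)) (by positivity)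
  refine this.congr_deriv ?_
  rw [resolventKernel3DSqDeriv]
  field_simp
  ring

theorem hasDerivAt_resolventKernel3DSqDeriv (κ : ℝ) {s : ℝ} (hs : 0 < s) :
    HasDerivAt (resolventKernel3DSqDeriv κ)
      (exp (-κ * √s) * ((κ * √s) ^ 2 + 3 * (κ * √s) + 3) / (16 * π * √s ^ 5)) s := by
  have hr : 0 < √s := sqrt_pos.2 hs
  have hsqrt := hasDerivAt_sqrt hs.ne'
  have := ((((hsqrt.const_mul (-κ)).exp).mul ((hsqrt.const_mul κ).add_const 1)).neg).div
    ((hsqrt.pow 3).const_mul (8 * π)) (by simp only [Pi.pow_apply]; positivity)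
  refine this.congr_deriv ?_
  simp only [Pi.pow_apply, Pi.neg_apply, Pi.mul_apply]
  field_simp
  ring

theorem strictConvexOn_resolventKernel3DSq (κ : ℝ) :
    StrictConvexOn ℝ (Set.Ioi 0) (resolventKernel3DSq κ) := by
  refine strictConvexOn_of_hasDerivAt2_pos (convex_Ioi 0) isOpen_Ioi
    (fun s hs ↦ hasDerivAt_resolventKernel3DSq κ hs)
    (fun s hs ↦ hasDerivAt_resolventKernel3DSqDeriv κ hs) fun s hs ↦ ?_
  have hr : 0 < √s := sqrt_pos.2 hs
  have hquad : 0 < (κ * √s) ^ 2 + 3 * (κ * √s) + 3 := by nlinarith [sq_nonneg (κ * √s + 3 / 2)]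
  positivity

theorem resolventKernel3DSqDeriv_neg {κ s : ℝ} (hκ : 0 ≤ κ) (hs : 0 < s) :
    resolventKernel3DSqDeriv κ s < 0 := by
  have hr : 0 < √s := sqrt_pos.2 hs
  rw [resolventKernel3DSqDeriv, neg_div, neg_lt_zero]
  positivity

theorem interactionEnergy_eq_sum_resolventKernel3DSq {n : ℕ} (κ : ℝ)
    (y : Fin n → EuclideanSpace ℝ (Fin 3)) :
    interactionEnergy κ y = ∑ p ∈ univ.offDiag, resolventKernel3DSq κ (‖y p.1 - y p.2‖ ^ 2) := by
  simp only [interactionEnergy, resolventKernel3DSq, sqrt_sq (norm_nonneg _)]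

theorem le_interactionEnergy_of_norm_eq_one {n : ℕ} (hn : 2 ≤ n) {κ : ℝ} (hκ : 0 ≤ κ)
    {y : Fin n → EuclideanSpace ℝ (Fin 3)} (hy : ∀ j, ‖y j‖ = 1) (hinj : Function.Injective y) :
    n * (n - 1) * resolventKernel3D κ √(2 * n / (n - 1)) ≤ interactionEnergy κ y ∧
      (interactionEnergy κ y = n * (n - 1) * resolventKernel3D κ √(2 * n / (n - 1)) ↔
        ∀ j j', j ≠ j' → ‖y j - y j'‖ = √(2 * n / (n - 1))) := by
  set c : ℝ := 2 * n / (n - 1) with hc_def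
  have hn1 : (0 : ℝ) < n - 1 := by
    rw [sub_pos, Nat.one_lt_cast]
    omega
  have hc : 0 < c := by positivity
  have hcard : (#(univ.offDiag : Finset (Fin n × Fin n)) : ℝ) = n * (n - 1) := by
    rw [offDiag_card, card_univ, Fintype.card_fin, Nat.cast_sub (Nat.le_mul_self n), Nat.cast_mul]
    ring
  have hpos : ∀ p ∈ univ.offDiag, ‖y p.1 - y p.2‖ ^ 2 ∈ Set.Ioi 0 := fun p hp ↦ by
    have hne : y p.1 ≠ y p.2 := hinj.ne (mem_offDiag.1 hp).2.2
    exact pow_pos (norm_pos_iff.2 (sub_ne_zero.2 hne)) 2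
  have hsum : ∑ p ∈ univ.offDiag, ‖y p.1 - y p.2‖ ^ 2 ≤ #(univ.offDiag) * c :=
    calc _ ≤ 2 * (n : ℝ) ^ 2 := by simpa using sum_offDiag_norm_sub_sq_le hy
      _ = #(univ.offDiag) * c := by
        rw [hcard, hc_def]
        field_simp
  obtain ⟨hle, heq⟩ := (strictConvexOn_resolventKernel3DSq κ).card_mul_le_sum hc
    (hasDerivAt_resolventKernel3DSq κ hc) (resolventKernel3DSqDeriv_neg hκ hc).le hpos hsum
  rw [hcard] at hle heq
  rw [interactionEnergy_eq_sum_resolventKernel3DSq]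
  refine ⟨hle, heq.trans ?_⟩
  simp only [mem_offDiag, mem_univ, true_and, Prod.forall]
  refine forall₂_congr fun j j' ↦ imp_congr_right fun _ ↦ ?_
  rw [eq_comm (b := √c), sqrt_eq_iff_eq_sq hc.le (norm_nonneg _), eq_comm]

theorem sphere_three_points_energy_min (κ : ℝ) (hκ : 0 < κ)
    (y : Fin 3 → EuclideanSpace ℝ (Fin 3)) (hsphere : ∀ j, ‖y j‖ = 1)
    (hdist : Function.Injective y) :
    interactionEnergy κ y ≥ 6 * resolventKernel3D κ (Real.sqrt 3) ∧
    (interactionEnergy κ y = 6 * resolventKernel3D κ (Real.sqrt 3) ↔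
      ∀ j j' : Fin 3, j ≠ j' → ‖y j - y j'‖ = Real.sqrt 3) := by
  have h := le_interactionEnergy_of_norm_eq_one (by norm_num) hκ.le hsphere hdist
  norm_num at h
  exact h
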